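/- arXiv:2306.06836 — 2 statements merged into one kernel-verified Lean document; each statement's English description precedes it below -/
import Mathlib

section
/- Suppose A and B are d×d positive definite real matrices with A ⪰ B (i.e., A − B is positive semidefinite). Then for every x ∈ ℝ^d, ‖x‖_{B^{-1}} ≤ ‖x‖_{A^{-1}} · √(det(A)/det(B)), where ‖x‖_M := √(xᵀ M x). -/
/-!
Adding `s • xxᵀ` to both sides of `B ≤ A` preserves the Loewner order, and the determinant is
monotone on positive definite matrices (conjugating by `B^{-1/2}` reduces this to `1 ≤ N ⟹
1 ≤ det N`). By the matrix determinant lemma this reads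
`det B (1 + s ‖x‖²_{B⁻¹}) ≤ det A (1 + s ‖x‖²_{A⁻¹})` for every `s > 0`, and letting `s → ∞` gives
`det B ‖x‖²_{B⁻¹} ≤ det A ‖x‖²_{A⁻¹}`.
-/

open Matrix

theorem le_of_forall_pos_add_mul_le_add_mul {K : Type*} [Field K] [LinearOrder K]
    [IsStrictOrderedRing K] {p q p' q' : K} (h : ∀ s > 0, p + s * q ≤ p' + s * q') :
    q ≤ q' := by
  by_contra! hq
  have hpos : 0 < q - q' := sub_pos.mpr hq
  set s := (|p' - p| + 1) / (q - q')
  have hs : s * (q - q') = |p' - p| + 1 := div_mul_cancel₀ _ hpos.ne'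
  have := h s (by positivity)
  nlinarith [le_abs_self (p' - p)]

namespace Matrix

variable {n : Type*} [Fintype n] [DecidableEq n]

theorem det_add_vecMulVec {R : Type*} [CommRing R] {A : Matrix n n R} (hA : IsUnit A.det)
    (u v : n → R) : (A + vecMulVec u v).det = A.det * (1 + v ⬝ᵥ A⁻¹ *ᵥ u) := by
  have h : A + vecMulVec u v = A * (1 + replicateCol Unit (A⁻¹ *ᵥ u) * replicateRow Unit v) := by
    rw [Matrix.mul_add, Matrix.mul_one, ← vecMulVec_eq, mul_vecMulVec, mulVec_mulVec,
      mul_nonsing_inv A hA, one_mulVec]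
  rw [h, det_mul, det_one_add_replicateCol_mul_replicateRow]

open scoped MatrixOrder ComplexOrder

variable {𝕜 : Type*} [RCLike 𝕜]

theorem one_le_det_of_one_le {N : Matrix n n 𝕜} (h : 1 ≤ N) : 1 ≤ N.det := by
  have hN : N.IsHermitian := by simpa using h.isHermitian.add isHermitian_one
  rw [hN.det_eq_prod_eigenvalues]
  refine Finset.one_le_prod fun i _ => ?_
  exact_mod_cast (CFC.one_le_iff N hN.isSelfAdjoint).mp h _ (hN.eigenvalues_mem_spectrum_real i)

theorem PosDef.det_le_det_of_le {A B : Matrix n n 𝕜} (hB : B.PosDef) (hBA : B ≤ A) :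
    B.det ≤ A.det := by
  set S := CFC.sqrt B
  have hS : S.PosDef := (IsStrictlyPositive.sqrt B hB.isStrictlyPositive).posDef
  set T := S⁻¹
  have hT : IsSelfAdjoint T := hS.inv.isHermitian
  have hTBT : T * B * T = 1 := by
    rw [← CFC.sqrt_mul_sqrt_self B hB.posSemidef.nonneg, ← Matrix.mul_assoc,
      nonsing_inv_mul S hS.det_pos.ne'.isUnit, Matrix.one_mul,
      mul_nonsing_inv S hS.det_pos.ne'.isUnit]
  have hTAT : 1 ≤ T * A * T := hTBT ▸ hT.conjugate_le_conjugate hBA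
  calc B.det = B.det * 1 := (mul_one _).symm
    _ ≤ B.det * (T * A * T).det := by gcongr; exacts [hB.det_pos.le, one_le_det_of_one_le hTAT]
    _ = A.det * (T * B * T).det := by simp only [det_mul]; ring
    _ = A.det := by rw [hTBT, det_one, mul_one]

end Matrix

theorem norm_ratio_det (d : ℕ) (A B : Matrix (Fin d) (Fin d) ℝ)
    (hA : A.PosDef) (hB : B.PosDef) (hAB : (A - B).PosSemidef) (x : Fin d → ℝ) :
    Real.sqrt (x ⬝ᵥ B⁻¹ *ᵥ x) ≤ Real.sqrt (x ⬝ᵥ A⁻¹ *ᵥ x) * Real.sqrt (A.det / B.det) := by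
  have hdet_rank_one : ∀ s > 0, B.det + s * (B.det * (x ⬝ᵥ B⁻¹ *ᵥ x)) ≤
      A.det + s * (A.det * (x ⬝ᵥ A⁻¹ *ᵥ x)) := fun s hs => by
    have hX : (s • vecMulVec x x).PosSemidef := (posSemidef_vecMulVec_self_star x).smul hs.le
    have hdet := (hB.add_posSemidef hX).det_le_det_of_le (A := A + s • vecMulVec x x)
      (by rwa [Matrix.le_iff, add_sub_add_right_eq_sub])
    rw [← smul_vecMulVec, det_add_vecMulVec hB.det_pos.ne'.isUnit,
      det_add_vecMulVec hA.det_pos.ne'.isUnit, mulVec_smul, mulVec_smul, dotProduct_smul,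
      dotProduct_smul, smul_eq_mul, smul_eq_mul] at hdet
    linarith
  have hquad : B.det * (x ⬝ᵥ B⁻¹ *ᵥ x) ≤ A.det * (x ⬝ᵥ A⁻¹ *ᵥ x) :=
    le_of_forall_pos_add_mul_le_add_mul hdet_rank_one
  have hle : x ⬝ᵥ B⁻¹ *ᵥ x ≤ x ⬝ᵥ A⁻¹ *ᵥ x * (A.det / B.det) := by
    rw [mul_div_assoc', le_div_iff₀ hB.det_pos]
    linarith
  calc Real.sqrt (x ⬝ᵥ B⁻¹ *ᵥ x) ≤ Real.sqrt (x ⬝ᵥ A⁻¹ *ᵥ x * (A.det / B.det)) :=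
        Real.sqrt_le_sqrt hle
    _ = _ := Real.sqrt_mul (by simpa using hA.inv.posSemidef.dotProduct_mulVec_nonneg x) _
end

section
/- Let X be a random variable with E[X] = 0 and E[|X|^{1+ε}] ≤ b^{1+ε} for some ε ∈ (0,1] and b > 0. Let M be a deterministic real with |M| ≤ 1 and let τ > 0. Then E[exp(M · Ψ_1(X/τ))] ≤ 1 + b^{1+ε}/τ^{1+ε}, where Ψ_1(x) = x for |x| ≤ 1 and Ψ_1(x) = sign(x) otherwise. -/
open MeasureTheory

noncomputable def huberScore1 (x : ℝ) : ℝ :=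
  if |x| ≤ 1 then x else Real.sign x

lemma measurable_huberScore1 : Measurable huberScore1 := by
  unfold huberScore1 Real.sign
  exact Measurable.ite (measurableSet_le (by fun_prop) measurable_const) measurable_id
    (Measurable.ite (measurableSet_lt measurable_id measurable_const) measurable_const
      (Measurable.ite (measurableSet_lt measurable_const measurable_id) measurable_const
        measurable_const))

lemma exp_le_quad {t : ℝ} (ht : |t| ≤ 1) : Real.exp t ≤ 1 + t + t ^ 2 := by
  have h := Real.exp_bound ht (n := 2) (by norm_num)
  have h2 : ∑ m ∈ Finset.range 2, t ^ m / (m.factorial : ℝ) = 1 + t := by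
    simp [Finset.sum_range_succ]
  rw [h2] at h
  norm_num [Nat.factorial] at h
  have h3 := (abs_le.1 h).2
  nlinarith [sq_abs t, sq_nonneg t]

lemma abs_huber_le_one (x : ℝ) : |huberScore1 x| ≤ 1 := by
  unfold huberScore1
  split
  · assumption
  · rcases Real.sign_apply_eq x with h | h | h <;> rw [h] <;> norm_num

lemma key_bound {ε : ℝ} (hε1 : 0 < ε) (hε2 : ε ≤ 1) {m : ℝ} (hm : |m| ≤ 1) (x : ℝ) :
    Real.exp (m * huberScore1 x) ≤ 1 + m * x + |x| ^ (1 + ε) := by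
  have hmx : |m * huberScore1 x| ≤ 1 := by
    rw [abs_mul]
    calc |m| * |huberScore1 x| ≤ 1 * 1 :=
      mul_le_mul hm (abs_huber_le_one x) (abs_nonneg _) zero_le_one
    _ = 1 := by ring
  have hexp := exp_le_quad hmx
  by_cases hx : |x| ≤ 1
  · rw [huberScore1, if_pos hx] at hexp ⊢
    have hsq : (m * x) ^ 2 ≤ |x| ^ (1 + ε) := by
      rcases eq_or_lt_of_le (abs_nonneg x) with h0 | h0
      · have : x = 0 := by simpa [abs_eq_zero] using h0.symm
        simp [this, Real.zero_rpow (by positivity : (1:ℝ) + ε ≠ 0)]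
      · have h1 : |x| ^ ((2:ℝ)) ≤ |x| ^ (1 + ε) :=
          Real.rpow_le_rpow_of_exponent_ge h0 hx (by linarith)
        have h2 : |x| ^ ((2:ℝ)) = x ^ 2 := by
          rw [show ((2:ℝ)) = ((2:ℕ):ℝ) by norm_num, Real.rpow_natCast, sq_abs]
        calc (m * x) ^ 2 = m ^ 2 * x ^ 2 := by ring
          _ ≤ 1 * x ^ 2 := by
              have := (sq_le_one_iff_abs_le_one m).2 hm
              nlinarith [sq_nonneg x]
          _ ≤ |x| ^ (1 + ε) := by rw [one_mul, ← h2]; exact h1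
    linarith
  · push_neg at hx
    rw [huberScore1, if_neg (not_le.2 hx)] at hexp ⊢
    set s := Real.sign x with hs
    have hsx : |s - x| = |x| - 1 := by
      rcases lt_trichotomy x 0 with h | h | h
      · have hax : |x| = -x := abs_of_neg h
        rw [hax] at hx ⊢
        rw [hs, Real.sign_of_neg h, abs_of_nonneg (by linarith)]
        ring
      · simp [h] at hx; linarith
      · have hax : |x| = x := abs_of_pos h
        rw [hax] at hx ⊢
        rw [hs, Real.sign_of_pos h, abs_of_nonpos (by linarith)]
        ring
    have habs : |x| ≤ |x| ^ (1 + ε) := by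
      calc |x| = |x| ^ ((1:ℝ)) := (Real.rpow_one _).symm
      _ ≤ |x| ^ (1 + ε) := Real.rpow_le_rpow_of_exponent_le hx.le (by linarith)
    have hms : (m * s) ^ 2 ≤ 1 := by
      rw [huberScore1, if_neg (not_le.2 hx), ← hs] at hmx
      exact (sq_le_one_iff_abs_le_one _).2 hmx
    have hdiff : m * (s - x) ≤ |x| - 1 := by
      calc m * (s - x) ≤ |m * (s - x)| := le_abs_self _
      _ = |m| * |s - x| := abs_mul _ _
      _ ≤ 1 * (|x| - 1) := by
          rw [hsx]; exact mul_le_mul hm le_rfl (by linarith) zero_le_one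
      _ = |x| - 1 := one_mul _
    nlinarith

theorem mgf_huberScore_bound {Ω : Type*} [MeasurableSpace Ω] (μ : Measure Ω)
    [IsProbabilityMeasure μ] (X : Ω → ℝ) (hX : Measurable X)
    (ε b : ℝ) (hε : ε ∈ Set.Ioc (0 : ℝ) 1) (hb : 0 < b)
    (hint : Integrable X μ) (hmean : ∫ ω, X ω ∂μ = 0)
    (hintmom : Integrable (fun ω => |X ω| ^ (1 + ε)) μ)
    (hmom : ∫ ω, |X ω| ^ (1 + ε) ∂μ ≤ b ^ (1 + ε))
    (M : ℝ) (hM : |M| ≤ 1) (τ : ℝ) (hτ : 0 < τ) :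
    ∫ ω, Real.exp (M * huberScore1 (X ω / τ)) ∂μ ≤ 1 + b ^ (1 + ε) / τ ^ (1 + ε) := by
  obtain ⟨hε1, hε2⟩ := hε
  -- rewrite |X ω / τ| ^ (1+ε)
  have habsdiv : ∀ ω, |X ω / τ| ^ (1 + ε) = |X ω| ^ (1 + ε) / τ ^ (1 + ε) := by
    intro ω
    rw [abs_div, abs_of_pos hτ, Real.div_rpow (abs_nonneg _) hτ.le]
  -- pointwise bound
  have hpt : ∀ ω, Real.exp (M * huberScore1 (X ω / τ)) ≤
      1 + (M / τ) * X ω + |X ω| ^ (1 + ε) / τ ^ (1 + ε) := by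
    intro ω
    have := key_bound hε1 hε2 hM (X ω / τ)
    rw [habsdiv ω] at this
    calc Real.exp (M * huberScore1 (X ω / τ))
        ≤ 1 + M * (X ω / τ) + |X ω| ^ (1 + ε) / τ ^ (1 + ε) := this
      _ = 1 + (M / τ) * X ω + |X ω| ^ (1 + ε) / τ ^ (1 + ε) := by ring_nf
  -- integrability of LHS
  have hmeas : Measurable fun ω => Real.exp (M * huberScore1 (X ω / τ)) :=
    (Real.measurable_exp.comp ((measurable_const.mul
      (measurable_huberScore1.comp (hX.div_const τ)))))
  have hlhs_int : Integrable (fun ω => Real.exp (M * huberScore1 (X ω / τ))) μ := by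
    refine (integrable_const (Real.exp 1)).mono' hmeas.aestronglyMeasurable ?_
    refine Filter.Eventually.of_forall fun ω => ?_
    rw [Real.norm_eq_abs, abs_of_pos (Real.exp_pos _)]
    apply Real.exp_le_exp.2
    calc M * huberScore1 (X ω / τ) ≤ |M * huberScore1 (X ω / τ)| := le_abs_self _
      _ = |M| * |huberScore1 (X ω / τ)| := abs_mul _ _
      _ ≤ 1 * 1 := mul_le_mul hM (abs_huber_le_one _) (abs_nonneg _) zero_le_one
      _ = 1 := one_mul _
  -- integrability of RHS
  have hrhs_int : Integrable
      (fun ω => 1 + (M / τ) * X ω + |X ω| ^ (1 + ε) / τ ^ (1 + ε)) μ := by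
    exact ((integrable_const 1).add (hint.const_mul (M / τ))).add
      (hintmom.div_const _)
  -- conclude
  calc ∫ ω, Real.exp (M * huberScore1 (X ω / τ)) ∂μ
      ≤ ∫ ω, (1 + (M / τ) * X ω + |X ω| ^ (1 + ε) / τ ^ (1 + ε)) ∂μ :=
        integral_mono hlhs_int hrhs_int hpt
    _ = (∫ _ω, (1 : ℝ) ∂μ) + (M / τ) * (∫ ω, X ω ∂μ)
        + (∫ ω, |X ω| ^ (1 + ε) ∂μ) / τ ^ (1 + ε) := by
        have h2 : Integrable (fun ω => (M / τ) * X ω) μ := hint.const_mul _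
        have h1 : Integrable (fun ω => 1 + (M / τ) * X ω) μ :=
          (integrable_const 1).add h2
        rw [integral_add h1 (hintmom.div_const _),
          integral_add (integrable_const 1) h2, integral_const_mul, integral_div]
    _ = 1 + (∫ ω, |X ω| ^ (1 + ε) ∂μ) / τ ^ (1 + ε) := by
        rw [hmean, integral_const]; simp
    _ ≤ 1 + b ^ (1 + ε) / τ ^ (1 + ε) := by
        have hτp : (0:ℝ) < τ ^ (1 + ε) := Real.rpow_pos_of_pos hτ _
        gcongr
end
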